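/- arXiv:1809.04072 — 5 statements merged into one kernel-verified Lean document; each statement's English description precedes it below -/
import Mathlib

section
/- Let n > 1, m ≥ 1, j ≥ 0 be integers and define the sequence d by d_0 given with d_k = m·j + ⌈d_{k-1}/n⌉ for k ≥ 1. Then for all k ≥ 1, d_k = m·j + ⌈(m·j·n·(n^{k-1} - 1)/(n-1) + d_0)/n^k⌉. -/
/-! Writing `c = m j`, induction on `k` shows `d k = ⌈(d 0 + c n ∑_{i<k} nⁱ) / nᵏ⌉`: the step
collapses the nested ceiling with `⌈⌈x⌉ / n⌉ = ⌈x / n⌉` (valid for integers `n > 0`) and absorbs the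
added integer `c` into the numerator as `c nᵏ⁺¹`. The stated formula is this closed form with
one summand `c nᵏ` pulled out of the ceiling and the geometric sum evaluated. -/

open Finset

theorem Int.ceil_intCast_ceil_div {k : Type*} [Field k] [LinearOrder k] [IsStrictOrderedRing k]
    [FloorRing k] (x : k) {b : ℤ} (hb : 0 < b) : ⌈(⌈x⌉ : k) / b⌉ = ⌈x / b⌉ := by
  have hb' : (0 : k) < b := Int.cast_pos.mpr hb
  refine eq_of_forall_ge_iff fun z ↦ ?_
  rw [Int.ceil_le, Int.ceil_le, div_le_iff₀ hb', div_le_iff₀ hb', ← Int.cast_mul, Int.cast_le,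
    Int.ceil_le]

theorem Int.ceil_add_intCast_mul_div {k : Type*} [Field k] [LinearOrder k] [IsStrictOrderedRing k]
    [FloorRing k] (x : k) (c : ℤ) {y : k} (hy : y ≠ 0) : ⌈(x + c * y) / y⌉ = ⌈x / y⌉ + c := by
  rw [add_div, mul_div_cancel_right₀ _ hy, Int.ceil_add_intCast]

theorem ceil_recurrence_eq_ceil_geom_sum (c n : ℤ) (hn : 0 < n) (d : ℕ → ℤ)
    (hrec : ∀ k, d (k + 1) = c + ⌈(d k : ℝ) / n⌉) (k : ℕ) :
    d k = ⌈((d 0 : ℝ) + c * n * ∑ i ∈ range k, (n : ℝ) ^ i) / (n : ℝ) ^ k⌉ := by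
  have hn' : (n : ℝ) ≠ 0 := (Int.cast_pos.mpr hn).ne'
  induction k with
  | zero => simp
  | succ k ih =>
    rw [hrec, ih, Int.ceil_intCast_ceil_div _ hn, div_div, ← pow_succ, add_comm c,
      ← Int.ceil_add_intCast_mul_div _ c (pow_ne_zero _ hn'), sum_range_succ]
    congr 2
    ring

theorem deck_id_formula_general (n m j : ℤ) (hn : 1 < n)
    (d : ℕ → ℤ)
    (hrec : ∀ k : ℕ, 1 ≤ k → d k = m * j + ⌈((d (k - 1) : ℝ)) / (n : ℝ)⌉) :
    ∀ k : ℕ, 1 ≤ k →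
      d k = m * j +
        ⌈((m : ℝ) * j * n * (((n : ℝ) ^ (k - 1) - 1) / ((n : ℝ) - 1)) + (d 0 : ℝ)) /
          (n : ℝ) ^ k⌉ := by
  intro k hk
  obtain ⟨l, rfl⟩ : ∃ l, k = l + 1 := ⟨k - 1, by omega⟩
  have hn1 : (n : ℝ) ≠ 1 := by exact_mod_cast hn.ne'
  have hpow : (n : ℝ) ^ (l + 1) ≠ 0 := pow_ne_zero _ (by exact_mod_cast (by omega : n ≠ 0))
  rw [ceil_recurrence_eq_ceil_geom_sum (m * j) n (by omega) d
      (fun k ↦ by simpa using hrec (k + 1) (by omega)),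
    Nat.add_sub_cancel, ← geom_sum_eq hn1, add_comm (m * j), ← Int.ceil_add_intCast_mul_div _ _ hpow,
    sum_range_succ]
  congr 2
  push_cast
  ring

theorem deck_id_formula (n m j : ℤ) (hn : 1 < n) (hm : 1 ≤ m) (hj : 0 ≤ j)
    (d : ℕ → ℤ)
    (hrec : ∀ k : ℕ, 1 ≤ k → d k = m * j + ⌈((d (k - 1) : ℝ)) / (n : ℝ)⌉) :
    ∀ k : ℕ, 1 ≤ k →
      d k = m * j +
        ⌈((m : ℝ) * j * n * (((n : ℝ) ^ (k - 1) - 1) / ((n : ℝ) - 1)) + (d 0 : ℝ)) /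
          (n : ℝ) ^ k⌉ :=
  deck_id_formula_general n m j hn d hrec
end

section
/- Let C, n, m, k be positive integers with n > 1, C = m·n, and n^k > C - 1. Then for every integer d_0 with 1 ≤ d_0 ≤ C, m·(n-1) + ⌈(m·(n-1)·n·(n^{k-1} - 1)/(n-1) + d_0)/n^k⌉ = C. -/
lemma mul_sub_one_mul_mul_geom_div {K : Type*} [Field K] (m : K) {x : K} (hx : x ≠ 1)
    {k : ℕ} (hk : 0 < k) :
    m * (x - 1) * x * ((x ^ (k - 1) - 1) / (x - 1)) = m * x ^ k - m * x := by
  obtain ⟨j, rfl⟩ := Nat.exists_eq_add_one_of_ne_zero hk.ne'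
  have hx' : x - 1 ≠ 0 := sub_ne_zero.mpr hx
  rw [Nat.add_sub_cancel]
  field_simp
  ring

lemma Int.ceil_div_eq_zero {K : Type*} [Field K] [LinearOrder K] [IsStrictOrderedRing K]
    [FloorRing K] {a b : K} (hb : 0 < b) (hlo : -b < a) (hhi : a ≤ 0) : ⌈a / b⌉ = 0 := by
  rw [Int.ceil_eq_zero_iff, Set.mem_Ioc, lt_div_iff₀ hb, neg_one_mul]
  exact ⟨hlo, div_nonpos_of_nonpos_of_nonneg hhi hb.le⟩

theorem trick_j_top_solvable_general (C n m : ℤ) (k : ℕ) (hn : 1 < n)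
    (hk : 0 < k) (hCmn : C = m * n) (hnk : C - 1 < n ^ k) :
    ∀ d0 : ℤ, 1 ≤ d0 → d0 ≤ C →
      m * (n - 1) +
        ⌈((m : ℝ) * ((n : ℝ) - 1) * n * (((n : ℝ) ^ (k - 1) - 1) / ((n : ℝ) - 1)) +
            (d0 : ℝ)) / (n : ℝ) ^ k⌉ = C := by
  intro d0 hd1 hd2
  have hn' : (1 : ℝ) < n := by exact_mod_cast hn
  have hnk_pos : (0 : ℝ) < (n : ℝ) ^ k := by positivity
  -- The numerator is `m n^k + (d0 - C)`, and `d0 - C ∈ (-n^k, 0]`.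
  have hsplit : ((m : ℝ) * n ^ k - m * n + d0) / (n : ℝ) ^ k
      = ((d0 - C : ℤ) : ℝ) / (n : ℝ) ^ k + (m : ℤ) := by
    field_simp
    push_cast [hCmn]
    ring
  have hlo : -(n : ℝ) ^ k < ((d0 - C : ℤ) : ℝ) := by
    have : -n ^ k < d0 - C := by omega
    exact_mod_cast this
  have hhi : ((d0 - C : ℤ) : ℝ) ≤ 0 := by exact_mod_cast sub_nonpos.mpr hd2
  rw [mul_sub_one_mul_mul_geom_div _ hn'.ne' hk, hsplit, Int.ceil_add_intCast,
    Int.ceil_div_eq_zero hnk_pos hlo hhi, hCmn]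
  ring

theorem trick_j_top_solvable (C n m : ℤ) (k : ℕ) (hC : 0 < C) (hn : 1 < n)
    (hm : 0 < m) (hk : 0 < k) (hCmn : C = m * n) (hnk : C - 1 < n ^ k) :
    ∀ d0 : ℤ, 1 ≤ d0 → d0 ≤ C →
      m * (n - 1) +
        ⌈((m : ℝ) * ((n : ℝ) - 1) * n * (((n : ℝ) ^ (k - 1) - 1) / ((n : ℝ) - 1)) +
            (d0 : ℝ)) / (n : ℝ) ^ k⌉ = C :=
  trick_j_top_solvable_general C n m k hn hk hCmn hnk
end

section
/- Let C, n, m, j be positive integers with n > 1, C = m·n, 0 < j < n-1, and suppose (n-1) divides m·j. Set b = m·j/(n-1) ∈ ℤ. Then (with d_k(d_0) = m·j + b + ⌈(d_0 - b·n)/n^k⌉) for every k ≥ 1 the map d_0 ↦ d_k(d_0) on {1, ..., C} is not constant; concretely, ⌈(1 - b·n)/n^k⌉ ≤ 0 < ⌈(C - b·n)/n^k⌉ for every positive integer k. -/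
/-!
Since `0 < j < n - 1`, the integer `b = m j / (n - 1)` satisfies `0 < b < m`, hence
`1 ≤ b n < m n = C`. So `(1 - b n) / n ^ k ≤ 0 < (C - b n) / n ^ k`, and taking ceilings
preserves both inequalities.
-/

theorem pos_and_lt_of_mul_eq_mul {R : Type*} [CommRing R] [LinearOrder R] [IsStrictOrderedRing R]
    {b d m j : R} (h : b * d = m * j) (hm : 0 < m) (hj : 0 < j) (hjd : j < d) :
    0 < b ∧ b < m := by
  have hd : 0 < d := hj.trans hjd
  refine ⟨pos_of_mul_pos_left (h ▸ mul_pos hm hj) hd.le, lt_of_mul_lt_mul_right ?_ hd.le⟩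
  rw [h]
  exact mul_lt_mul_of_pos_left hjd hm

theorem trick_middle_not_solvable_general (C n m j b : ℤ) (hn : 1 < n)
    (hm : 0 < m) (hj : 0 < j) (hjn : j < n - 1) (hCmn : C = m * n)
    (hb : b * (n - 1) = m * j) :
    ∀ k : ℕ, 1 ≤ k →
      ⌈((1 : ℝ) - (b : ℝ) * n) / (n : ℝ) ^ k⌉ ≤ 0 ∧
        0 < ⌈((C : ℝ) - (b : ℝ) * n) / (n : ℝ) ^ k⌉ := by
  intro k _
  obtain ⟨hb_pos, hb_lt⟩ := pos_and_lt_of_mul_eq_mul hb hm hj hjn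
  have h_one_le : (1 : ℝ) ≤ b * n := by
    exact_mod_cast one_le_mul_of_one_le_of_one_le hb_pos hn.le
  have h_lt_C : (b : ℝ) * n < C := by
    exact_mod_cast hCmn ▸ mul_lt_mul_of_pos_right hb_lt (zero_lt_one.trans hn)
  have hpow : (0 : ℝ) < (n : ℝ) ^ k := pow_pos (by exact_mod_cast zero_lt_one.trans hn) k
  exact ⟨Int.ceil_nonpos.2 (div_nonpos_of_nonpos_of_nonneg (by linarith) hpow.le),
    Int.ceil_pos.2 (div_pos (by linarith) hpow)⟩

theorem trick_middle_not_solvable (C n m j b : ℤ) (hC : 0 < C) (hn : 1 < n)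
    (hm : 0 < m) (hj : 0 < j) (hjn : j < n - 1) (hCmn : C = m * n)
    (hb : b * (n - 1) = m * j) :
    ∀ k : ℕ, 1 ≤ k →
      ⌈((1 : ℝ) - (b : ℝ) * n) / (n : ℝ) ^ k⌉ ≤ 0 ∧
        0 < ⌈((C : ℝ) - (b : ℝ) * n) / (n : ℝ) ^ k⌉ :=
  trick_middle_not_solvable_general C n m j b hn hm hj hjn hCmn hb
end

section
/- Let C, n, m be positive integers with n > 1 and C = m·n. The number of integers j with 0 ≤ j ≤ n-1 such that the trick (C, n, j) is solvable—i.e., j = 0, or j = n-1, or (0 < j < n-1 and (n-1) ∤ m·j)—equals n + 1 - gcd(m, n-1). -/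
/-!
Writing `g = gcd m (n-1)`, we have `(n-1) ∣ m*j` iff `(n-1)/g ∣ j`, so the unsolvable `j`,
those with `0 < j < n-1` and `(n-1) ∣ m*j`, are the `g - 1` proper multiples of `(n-1)/g`.
-/

open Finset

theorem Nat.dvd_mul_iff_div_gcd_dvd {t : ℕ} (m j : ℕ) (ht : 0 < t) :
    t ∣ m * j ↔ t / m.gcd t ∣ j := by
  have hg : 0 < m.gcd t := Nat.gcd_pos_of_pos_right m ht
  have hcop : (t / m.gcd t).Coprime (m / m.gcd t) :=
    (Nat.coprime_div_gcd_div_gcd hg).symm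
  calc t ∣ m * j ↔ m.gcd t * (t / m.gcd t) ∣ m.gcd t * (m / m.gcd t * j) := by
        rw [Nat.mul_div_cancel' (Nat.gcd_dvd_right m t), ← mul_assoc,
          Nat.mul_div_cancel' (Nat.gcd_dvd_left m t)]
    _ ↔ t / m.gcd t ∣ j := by rw [Nat.mul_dvd_mul_iff_left hg, hcop.dvd_mul_left]

theorem Nat.card_Ioc_filter_dvd_mul {t : ℕ} (m : ℕ) (ht : 0 < t) :
    #{j ∈ Ioc 0 t | t ∣ m * j} = m.gcd t := by
  simp_rw [Nat.dvd_mul_iff_div_gcd_dvd m _ ht, Nat.Ioc_filter_dvd_card_eq_div]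
  exact Nat.div_div_self (Nat.gcd_dvd_right m t) ht.ne'

theorem Nat.card_Ioo_filter_dvd_mul {t : ℕ} (m : ℕ) (ht : 0 < t) :
    #{j ∈ Ioo 0 t | t ∣ m * j} = m.gcd t - 1 := by
  rw [← Nat.card_Ioc_filter_dvd_mul m ht, ← Ioc_erase_right, filter_erase,
    card_erase_of_mem (by simp [ht])]

theorem count_solvable_general (n m : ℕ) (hn : 1 < n) :
    ((Finset.Icc 0 (n - 1)).filter
        (fun j => j = 0 ∨ j = n - 1 ∨ (0 < j ∧ j < n - 1 ∧ ¬ (n - 1) ∣ m * j))).card =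
      n + 1 - Nat.gcd m (n - 1) := by
  have ht : 0 < n - 1 := by omega
  have hsolvable :
      {j ∈ Icc 0 (n - 1) | j = 0 ∨ j = n - 1 ∨ (0 < j ∧ j < n - 1 ∧ ¬ (n - 1) ∣ m * j)} =
        Icc 0 (n - 1) \ {j ∈ Ioo 0 (n - 1) | (n - 1) ∣ m * j} := by
    ext j
    simp only [mem_filter, mem_sdiff, mem_Icc, mem_Ioo]
    omega
  rw [hsolvable, card_sdiff_of_subset (fun j => by simp only [mem_filter, mem_Ioo, mem_Icc]; omega),
    Nat.card_Ioo_filter_dvd_mul m ht, Nat.card_Icc]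
  have hg_le := Nat.le_of_dvd ht (Nat.gcd_dvd_right m (n - 1))
  have hg_pos := Nat.gcd_pos_of_pos_right m ht
  omega

theorem count_solvable (C n m : ℕ) (hC : 0 < C) (hn : 1 < n) (hm : 0 < m)
    (hCmn : C = m * n) :
    ((Finset.Icc 0 (n - 1)).filter
        (fun j => j = 0 ∨ j = n - 1 ∨ (0 < j ∧ j < n - 1 ∧ ¬ (n - 1) ∣ m * j))).card =
      n + 1 - Nat.gcd m (n - 1) :=
  count_solvable_general n m hn
end

section
/- For the 21 card trick: with C = 21, n = 3, j = 1, m = 7, b = 7/2, for every integer d_0 with 1 ≤ d_0 ≤ 21, 7 + ⌈7/2 + (d_0 - 21/2)/27⌉ = 11. In particular the tracked card is the 11th card after 3 iterations regardless of its initial position. -/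
/-! Three deals divide the initial offset `d₀ - 21/2` by `27 > 21`, so it moves `7/2` by less than
`1/2` and the ceiling is `4` whatever `d₀` was. -/

lemma abs_sub_half_div_lt_half {C N d : ℝ} (hCN : C < N) (hd : 0 ≤ d) (hdC : d ≤ C) :
    |(d - C / 2) / N| < 1 / 2 := by
  have hN : 0 < N := by linarith
  rw [abs_div, abs_of_pos hN, div_lt_iff₀ hN, abs_sub_lt_iff]
  constructor <;> linarith

lemma Int.ceil_intCast_add_half_add {k : ℤ} {x : ℝ} (hx : |x| < 1 / 2) :
    ⌈(k : ℝ) + 1 / 2 + x⌉ = k + 1 := by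
  rw [abs_lt] at hx
  rw [Int.ceil_eq_iff]
  push_cast
  constructor <;> linarith

theorem twentyone_card_trick :
    ∀ d0 : ℤ, 1 ≤ d0 → d0 ≤ 21 →
      7 + ⌈(7 / 2 : ℝ) + ((d0 : ℝ) - 21 / 2) / 27⌉ = 11 := by
  intro d0 h1 h2
  have hdev : |((d0 : ℝ) - 21 / 2) / 27| < 1 / 2 :=
    abs_sub_half_div_lt_half (by norm_num) (by positivity) (by exact_mod_cast h2)
  rw [show (7 / 2 : ℝ) = ((3 : ℤ) : ℝ) + 1 / 2 by norm_num, Int.ceil_intCast_add_half_add hdev]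
  norm_num
end
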